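/- Let (Ш, →, ↠, ↪) be a finite two-acyclic factorization system and let X be a closed set. Then the canonical join representation of X in the lattice of closed sets is {T(c) : c ∈ Cov(X)}. -/

import Mathlib

namespace SDL

variable {S : Type*} {L : Type*}

/-- `X^⊥ = {y | x ↛ y for all x ∈ X}` -/
def perpR (r : S → S → Prop) (X : Set S) : Set S := {y | ∀ x ∈ X, ¬ r x y}

/-- `^⊥Y = {x | x ↛ y for all y ∈ Y}` -/
def perpL (r : S → S → Prop) (Y : Set S) : Set S := {x | ∀ y ∈ Y, ¬ r x y}

/-- `(X, Y)` is a maximal orthogonal pair for `r`. -/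
def IsMOP (r : S → S → Prop) (X Y : Set S) : Prop := Y = perpR r X ∧ X = perpL r Y

/-- The set of maximal orthogonal pairs. -/
def Pairs (r : S → S → Prop) : Type _ := {p : Set S × Set S // IsMOP r p.1 p.2}

/-- `Pairs r` is ordered by containment in the first component. -/
instance (r : S → S → Prop) : PartialOrder (Pairs r) where
  le p q := p.val.1 ⊆ q.val.1
  le_refl _ := Set.Subset.rfl
  le_trans _ _ _ h h' := Set.Subset.trans h h'
  le_antisymm p q h h' := by
    apply Subtype.ext
    have h1 : p.val.1 = q.val.1 := subset_antisymm h h'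
    have h2 : p.val.2 = q.val.2 := by rw [p.prop.1, q.prop.1, h1]
    exact Prod.ext h1 h2

/-- `x ↠ y` iff for all `z`, `y → z` implies `x → z`. -/
def Onto (r : S → S → Prop) (x y : S) : Prop := ∀ z, r y z → r x z

/-- `x ↪ y` iff for all `z`, `z → x` implies `z → y`. -/
def Into (r : S → S → Prop) (x y : S) : Prop := ∀ z, r z x → r z y

/-- `Mult ↠ ↪` relates `x` to `z` iff `x ↠ y ↪ z` for some `y`. -/
def Mult (ont inj : S → S → Prop) (x z : S) : Prop := ∃ y, ont x y ∧ inj y z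

/-- `(S, r, ont, inj)` is a factorization system. -/
structure IsFactSystem (r ont inj : S → S → Prop) : Prop where
  refl : ∀ x, r x x
  onto_iff : ∀ x y, ont x y ↔ Onto r x y
  into_iff : ∀ x y, inj x y ↔ Into r x y
  mult_iff : ∀ x z, r x z ↔ Mult ont inj x z

/-- A two-acyclic factorization system. -/
structure IsTwoAcyclicFS (r ont inj : S → S → Prop) extends IsFactSystem r ont inj : Prop where
  onto_antisymm : ∀ x y, ont x y → ont y x → x = y
  into_antisymm : ∀ x y, inj x y → inj y x → x = y
  brick : ∀ x y, ont x y → inj y x → x = y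

/-- `T(x) = {x' | x ↠ x'}`. -/
def Tset (ont : S → S → Prop) (x : S) : Set S := {x' | ont x x'}

/-- `F(x) = {x' | x' ↪ x}`. -/
def Fset (inj : S → S → Prop) (x : S) : Set S := {x' | inj x' x}

/-- Restriction of a relation to a subset. -/
def restrictRel (r : S → S → Prop) (D : Set S) : D → D → Prop := fun a b => r a b

/-- A subset is closed if it equals its closure `^⊥(X^⊥)`. -/
def IsClosedSet (r : S → S → Prop) (X : Set S) : Prop := perpL r (perpR r X) = X

/-- The lattice of closed sets, ordered by containment. -/
abbrev Closeds (r : S → S → Prop) : Type _ := {X : Set S // IsClosedSet r X}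

/-- `Del(X, c) = X \ {x ∈ X : x ↠ c}`. -/
def Del (ont : S → S → Prop) (X : Set S) (c : S) : Set S := X \ {x | ont x c}

/-- `Cov(X)`: those `c ∈ X` with `Del(X,c)` closed and the closure of `Del(X,c) ∪ {c}` equal
to `X`. -/
def CovS (r ont : S → S → Prop) (X : Set S) : Set S :=
  {c | c ∈ X ∧ IsClosedSet r (Del ont X c) ∧ perpL r (perpR r (Del ont X c ∪ {c})) = X}

/-- Direct forcing: `x ⇝ y` iff `x` is `↠`-minimal in `F(y)` or `↪`-maximal in `T(y)`. -/
def Forces (ont inj : S → S → Prop) (x y : S) : Prop :=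
  (inj x y ∧ ∀ x', inj x' y → ont x x' → x' = x) ∨
  (ont y x ∧ ∀ x', ont y x' → inj x' x → x' = x)

/-- `down X` for a partial order given as a relation (`r x y` meaning `x ≥ y`). -/
def dnRel (r : S → S → Prop) (X : Set S) : Set S := {y | ∃ x ∈ X, r x y}

/-- `up X` for a partial order given as a relation (`r x y` meaning `x ≥ y`). -/
def upRel (r : S → S → Prop) (X : Set S) : Set S := {y | ∃ x ∈ X, r y x}

section OrderNotions

variable [PartialOrder L]

/-- Completely join-irreducible: there is `j⁎` such that `x < j ↔ x ≤ j⁎`. -/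
def CJIrr (j : L) : Prop := ∃ j', ∀ x : L, x < j ↔ x ≤ j'

/-- Completely meet-irreducible: there is `j^*` such that `x > m ↔ x ≥ m^*`. -/
def CMIrr (m : L) : Prop := ∃ m', ∀ x : L, m < x ↔ m' ≤ x

/-- `k = κ(j)`: `k` is the greatest element of `{y | j ⊓ y = j⁎}`. -/
def IsKappa (j k : L) : Prop :=
  ∃ j', (∀ x : L, x < j ↔ x ≤ j') ∧ IsGreatest {y : L | IsGLB ({j, y} : Set L) j'} k

/-- `k = κᵈ(m)`: `k` is the least element of `{x | m ⊔ x = m^*}`. -/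
def IsKappad (m k : L) : Prop :=
  ∃ m', (∀ x : L, m < x ↔ m' ≤ x) ∧ IsLeast {x : L | IsLUB ({m, x} : Set L) m'} k

/-- `L` is a κ-lattice: complete, meet and join generated by irreducibles, with inverse
bijections `κ` and `κᵈ` between the completely join- and meet-irreducibles. -/
def IsKappaLattice (L : Type*) [PartialOrder L] : Prop :=
  (∀ s : Set L, ∃ a, IsLUB s a) ∧
  (∀ s : Set L, ∃ a, IsGLB s a) ∧
  (∀ x : L, IsLUB {j : L | CJIrr j ∧ j ≤ x} x) ∧
  (∀ x : L, IsGLB {m : L | CMIrr m ∧ x ≤ m} x) ∧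
  (∀ j : L, CJIrr j → ∃ k, IsKappa j k ∧ CMIrr k ∧ IsKappad k j) ∧
  (∀ m : L, CMIrr m → ∃ k, IsKappad m k ∧ CJIrr k ∧ IsKappa k m)

/-- Well separated: `z₁ ≰ z₂` implies some completely join-irreducible `j` has `j ≤ z₁` and
`κ(j) ≥ z₂`. -/
def WellSeparated (L : Type*) [PartialOrder L] : Prop :=
  ∀ z₁ z₂ : L, ¬ z₁ ≤ z₂ → ∃ j k : L, CJIrr j ∧ IsKappa j k ∧ j ≤ z₁ ∧ z₂ ≤ k

/-- The set of completely join-irreducible elements, as a type. -/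
abbrev JIrrC (L : Type*) [PartialOrder L] : Type _ := {j : L // CJIrr j}

/-- `i →_L j` iff `i ≰ κ(j)`. -/
def toL (i j : JIrrC L) : Prop := ∃ k : L, IsKappa (j : L) k ∧ ¬ (i : L) ≤ k

/-- `i ↠_L j` iff `i ≥ j` in `L`. -/
def ontoL (i j : JIrrC L) : Prop := (j : L) ≤ (i : L)

/-- `i ↪_L j` iff `κ(i) ≥ κ(j)` in `L`. -/
def intoL (i j : JIrrC L) : Prop :=
  ∃ ki kj : L, IsKappa (i : L) ki ∧ IsKappa (j : L) kj ∧ kj ≤ ki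

/-- A poset is a semidistributive lattice (order-theoretically): binary joins and meets exist,
and both semidistributive laws hold. -/
def IsSDLattice (L : Type*) [PartialOrder L] : Prop :=
  (∀ x y : L, ∃ s, IsLUB ({x, y} : Set L) s) ∧
  (∀ x y : L, ∃ s, IsGLB ({x, y} : Set L) s) ∧
  (∀ x y z sxy sxz myz : L, IsLUB ({x, y} : Set L) sxy → IsLUB ({x, z} : Set L) sxz →
    sxy = sxz → IsGLB ({y, z} : Set L) myz → IsLUB ({x, myz} : Set L) sxy) ∧
  (∀ x y z mxy mxz syz : L, IsGLB ({x, y} : Set L) mxy → IsGLB ({x, z} : Set L) mxz →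
    mxy = mxz → IsLUB ({y, z} : Set L) syz → IsGLB ({x, syz} : Set L) mxy)

/-- `s` is the canonical join representation of `x`. -/
def IsCanonicalJoinRep (s : Set L) (x : L) : Prop :=
  IsLUB s x ∧ (∀ s' : Set L, IsLUB s' x → ∀ a ∈ s, ∃ b ∈ s', a ≤ b) ∧
  IsAntichain (· ≤ ·) s

end OrderNotions

/-- Join semidistributivity. -/
def JoinSD (L : Type*) [Lattice L] : Prop :=
  ∀ x y z : L, x ⊔ y = x ⊔ z → x ⊔ (y ⊓ z) = x ⊔ y

/-- Meet semidistributivity. -/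
def MeetSD (L : Type*) [Lattice L] : Prop :=
  ∀ x y z : L, x ⊓ y = x ⊓ z → x ⊓ (y ⊔ z) = x ⊓ y

/-- Complete join semidistributivity. -/
def CompletelyJoinSD (L : Type*) [CompleteLattice L] : Prop :=
  ∀ (X : Set L) (y z : L), X.Nonempty → (∀ x ∈ X, x ⊔ y = z) → sInf X ⊔ y = z

/-- Complete meet semidistributivity. -/
def CompletelyMeetSD (L : Type*) [CompleteLattice L] : Prop :=
  ∀ (X : Set L) (y z : L), X.Nonempty → (∀ x ∈ X, x ⊓ y = z) → sSup X ⊓ y = z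

end SDL

/-!
Closed sets are `↠`-down-closed, so every `T(c)` with `c ∈ Cov(X)` lies below `X`. Conversely,
if `y ∈ X` and `y → z`, take a lower cover `M` of `X` among closed sets containing
`X ∩ ^⊥{z}`; an `↪`-minimal element `c` of `M^⊥ \ X^⊥` lies in `Cov(X)` with `Del(X, c) = M`,
and `c ∉ M` forces `c → z`. Hence the `T(c)` generate `X`. Each such `T(c)` must be below
some member of any join representation of `X`, since otherwise the closed set `Del(X, c)` would
bound it; and `T(c) ⊆ T(c')` would put the closure of `Del(X, c) ∪ {c}` inside `Del(X, c')`.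
-/

namespace SDL

variable {S : Type*} {r ont inj : S → S → Prop}

theorem mem_perpL_perpR_iff {A : Set S} {y : S} :
    y ∈ perpL r (perpR r A) ↔ ∀ z, r y z → ∃ a ∈ A, r a z :=
  ⟨fun hy z hz => by by_contra! hc; exact hy z hc hz,
    fun hy z hzA hyz => let ⟨a, ha, haz⟩ := hy z hyz; hzA a ha haz⟩

theorem subset_perpL_perpR (A : Set S) : A ⊆ perpL r (perpR r A) :=
  fun a ha => mem_perpL_perpR_iff.2 fun _ hz => ⟨a, ha, hz⟩

theorem perpL_perpR_mono {A B : Set S} (hAB : A ⊆ B) :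
    perpL r (perpR r A) ⊆ perpL r (perpR r B) :=
  fun _ hy z hzB => hy z fun a ha => hzB a (hAB ha)

theorem IsClosedSet.of_perpL_perpR_subset {A : Set S} (hA : perpL r (perpR r A) ⊆ A) :
    IsClosedSet r A :=
  hA.antisymm (subset_perpL_perpR A)

theorem isClosedSet_perpL_perpR (A : Set S) : IsClosedSet r (perpL r (perpR r A)) :=
  .of_perpL_perpR_subset fun _ hy z hzA => hy z fun _ ha haz =>
    let ⟨_, hb, hbz⟩ := mem_perpL_perpR_iff.1 ha z haz
    hzA _ hb hbz

theorem isClosedSet_perpL (Y : Set S) : IsClosedSet r (perpL r Y) :=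
  .of_perpL_perpR_subset fun _ hx y hy => hx y fun _ hw => hw y hy

theorem IsClosedSet.inter {A B : Set S} (hA : IsClosedSet r A) (hB : IsClosedSet r B) :
    IsClosedSet r (A ∩ B) :=
  .of_perpL_perpR_subset fun _ hy =>
    ⟨hA.subset (perpL_perpR_mono Set.inter_subset_left hy),
      hB.subset (perpL_perpR_mono Set.inter_subset_right hy)⟩

theorem IsClosedSet.mem_iff {X : Set S} (hX : IsClosedSet r X) {y : S} :
    y ∈ X ↔ ∀ z, r y z → ∃ a ∈ X, r a z := by
  conv_lhs => rw [← hX]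
  exact mem_perpL_perpR_iff

theorem IsClosedSet.subset_of_perpR_subset {A B : Set S} (hB : IsClosedSet r B)
    (hAB : perpR r B ⊆ perpR r A) : A ⊆ B :=
  fun _ ha => hB ▸ fun z hz => subset_perpL_perpR A ha z (hAB hz)

namespace IsFactSystem

theorem onto_refl (h : IsFactSystem r ont inj) (x : S) : ont x x :=
  (h.onto_iff x x).2 fun _ hz => hz

theorem onto_trans (h : IsFactSystem r ont inj) {x y z : S} (hxy : ont x y) (hyz : ont y z) :
    ont x z :=
  (h.onto_iff x z).2 fun w hw => (h.onto_iff x y).1 hxy w ((h.onto_iff y z).1 hyz w hw)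

theorem into_refl (h : IsFactSystem r ont inj) (x : S) : inj x x :=
  (h.into_iff x x).2 fun _ hz => hz

theorem into_trans (h : IsFactSystem r ont inj) {x y z : S} (hxy : inj x y) (hyz : inj y z) :
    inj x z :=
  (h.into_iff x z).2 fun w hw => (h.into_iff y z).1 hyz w ((h.into_iff x y).1 hxy w hw)

theorem rel_of_onto_of_rel (h : IsFactSystem r ont inj) {x y z : S} (hxy : ont x y)
    (hyz : r y z) : r x z :=
  (h.onto_iff x y).1 hxy z hyz

theorem rel_of_rel_of_into (h : IsFactSystem r ont inj) {x y z : S} (hxy : r x y)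
    (hyz : inj y z) : r x z :=
  (h.into_iff y z).1 hyz x hxy

theorem rel_of_onto (h : IsFactSystem r ont inj) {x y : S} (hxy : ont x y) : r x y :=
  h.rel_of_onto_of_rel hxy (h.refl y)

theorem exists_onto_into (h : IsFactSystem r ont inj) {x z : S} (hxz : r x z) :
    ∃ y, ont x y ∧ inj y z :=
  (h.mult_iff x z).1 hxz

theorem mem_of_onto (h : IsFactSystem r ont inj) {X : Set S} (hX : IsClosedSet r X) {x y : S}
    (hx : x ∈ X) (hxy : ont x y) : y ∈ X :=
  hX.mem_iff.2 fun _ hz => ⟨x, hx, h.rel_of_onto_of_rel hxy hz⟩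

theorem isClosedSet_tset (h : IsFactSystem r ont inj) (c : S) : IsClosedSet r (Tset ont c) :=
  .of_perpL_perpR_subset fun _ hy => (h.onto_iff c _).2 fun z hz =>
    let ⟨_, ha, haz⟩ := mem_perpL_perpR_iff.1 hy z hz
    h.rel_of_onto_of_rel ha haz

theorem mem_of_into_minimal (h : IsFactSystem r ont inj) {X : Set S} (hX : IsClosedSet r X)
    {c : S} (hc : c ∉ perpR r X) (hmin : ∀ v ∈ X, inj v c → v = c) : c ∈ X := by
  obtain ⟨x, hx, hxc⟩ : ∃ x ∈ X, r x c := by simpa [perpR] using hc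
  obtain ⟨v, hxv, hvc⟩ := h.exists_onto_into hxc
  have hv : v ∈ X := h.mem_of_onto hX hx hxv
  exact hmin v hv hvc ▸ hv

theorem isClosedSet_del_of_into_minimal (h : IsFactSystem r ont inj) {X : Set S}
    (hX : IsClosedSet r X) {c : S} (hmin : ∀ v ∈ X, inj v c → v = c) :
    IsClosedSet r (Del ont X c) := by
  refine .of_perpL_perpR_subset fun y hy => ⟨hX.subset (perpL_perpR_mono Set.sdiff_subset hy), ?_⟩
  intro (hyc : ont y c)
  obtain ⟨m, ⟨hmX, hmc⟩, hrmc⟩ := mem_perpL_perpR_iff.1 hy c (h.rel_of_onto hyc)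
  obtain ⟨v, hmv, hvc⟩ := h.exists_onto_into hrmc
  exact hmc (hmin v (h.mem_of_onto hX hmX hmv) hvc ▸ hmv)

theorem exists_mem_of_isLUB_of_mem_covS (h : IsFactSystem r ont inj) {X : Closeds r}
    {s : Set (Closeds r)} (hs : IsLUB s X) {c : S} (hc : c ∈ CovS r ont X.val) :
    ∃ B ∈ s, c ∈ B.val := by
  by_contra! hcs
  let D : Closeds r := ⟨Del ont X.val c, hc.2.1⟩
  have hD : D ∈ upperBounds s := fun B hB x hx =>
    ⟨hs.1 hB hx, fun hxc => hcs B hB (h.mem_of_onto B.prop hx hxc)⟩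
  exact (hs.2 hD hc.1).2 (h.onto_refl c)

end IsFactSystem

namespace IsTwoAcyclicFS

theorem exists_into_minimal [Finite S] (h : IsTwoAcyclicFS r ont inj) {M X : Set S}
    (hMX : ¬ perpR r M ⊆ perpR r X) :
    ∃ c ∈ perpR r M, c ∉ perpR r X ∧ ∀ v ∈ X, inj v c → v = c := by
  obtain ⟨c, ⟨hcM, hcX⟩, hmin⟩ := (Set.toFinite (perpR r M \ perpR r X)).exists_minimalFor
    (Fset inj) _ (Set.sdiff_nonempty.2 hMX)
  refine ⟨c, hcM, hcX, fun v hv hvc => h.into_antisymm v c hvc ?_⟩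
  have hvZ : v ∈ perpR r M \ perpR r X :=
    ⟨fun a ha hav => hcM a ha (h.rel_of_rel_of_into hav hvc),
      fun hvX => hvX v hv (h.refl v)⟩
  exact hmin hvZ (fun _ hw => h.into_trans hw hvc) (h.into_refl c)

theorem exists_mem_covS_not_mem_of_covBy [Finite S] (h : IsTwoAcyclicFS r ont inj)
    {M X : Closeds r} (hMX : M ⋖ X) : ∃ c ∈ CovS r ont X.val, c ∉ M.val := by
  obtain ⟨c, hcM, hcX', hmin⟩ := h.exists_into_minimal (M := M.val) (X := X.val)
    fun hsub => hMX.lt.not_ge (M.prop.subset_of_perpR_subset hsub)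
  have hcX : c ∈ X.val := h.mem_of_into_minimal X.prop hcX' hmin
  have hcnM : c ∉ M.val := fun hc => hcM c hc (h.refl c)
  let D : Closeds r := ⟨Del ont X.val c, h.isClosedSet_del_of_into_minimal X.prop hmin⟩
  have hMD : M ≤ D := fun a ha =>
    ⟨hMX.le ha, fun hac => hcnM (h.mem_of_onto M.prop ha hac)⟩
  have hDM : Del ont X.val c = M.val := congrArg Subtype.val <|
    (hMX.eq_or_eq hMD Set.sdiff_subset).resolve_right fun hDX =>
      (congrArg Subtype.val hDX ▸ hcX : c ∈ D.val).2 (h.onto_refl c)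
  let C : Closeds r := ⟨_, isClosedSet_perpL_perpR (Del ont X.val c ∪ {c})⟩
  have hMC : M ≤ C := fun a ha => subset_perpL_perpR _ (.inl (hDM ▸ ha))
  have hCle : C ≤ X := (perpL_perpR_mono (Set.union_subset Set.sdiff_subset
    (Set.singleton_subset_iff.2 hcX))).trans X.prop.subset
  have hCM : C ≠ M := fun hCM => hcnM (hCM ▸ subset_perpL_perpR _ (.inr rfl))
  have hCX : C = X := (hMX.eq_or_eq hMC hCle).resolve_left hCM
  exact ⟨c, ⟨hcX, D.prop, congrArg Subtype.val hCX⟩, hcnM⟩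

theorem exists_mem_covS_rel [Finite S] (h : IsTwoAcyclicFS r ont inj) {X : Closeds r}
    {y z : S} (hy : y ∈ X.val) (hyz : r y z) : ∃ c ∈ CovS r ont X.val, r c z := by
  let W : Closeds r := ⟨X.val ∩ perpL r {z}, X.prop.inter (isClosedSet_perpL _)⟩
  have hWX : W < X := lt_of_le_of_ne Set.inter_subset_left fun hWX =>
    (congrArg Subtype.val hWX ▸ hy : y ∈ W.val).2 z rfl hyz
  obtain ⟨M, hWM, hMX⟩ := exists_le_covBy_of_lt hWX
  obtain ⟨c, hc, hcM⟩ := h.exists_mem_covS_not_mem_of_covBy hMX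
  exact ⟨c, hc, by_contra fun hcz => hcM (hWM ⟨hc.1, fun _ hz => hz ▸ hcz⟩)⟩

theorem isLUB_tset_covS [Finite S] (h : IsTwoAcyclicFS r ont inj) (X : Closeds r) :
    IsLUB {Y : Closeds r | ∃ c ∈ CovS r ont X.val, Y.val = Tset ont c} X := by
  refine ⟨?_, fun Z hZ y hy => Z.prop.mem_iff.2 fun z hyz => ?_⟩
  · rintro ⟨_, _⟩ ⟨c, hc, rfl⟩ x hx
    exact h.mem_of_onto X.prop hc.1 hx
  · obtain ⟨c, hc, hcz⟩ := h.exists_mem_covS_rel hy hyz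
    exact ⟨c, hZ (a := ⟨_, h.isClosedSet_tset c⟩) ⟨c, hc, rfl⟩ (h.onto_refl c), hcz⟩

theorem eq_of_onto_of_mem_covS (h : IsTwoAcyclicFS r ont inj) {X : Set S} {c c' : S}
    (hc : c ∈ CovS r ont X) (hc' : c' ∈ CovS r ont X) (hc'c : ont c' c) : c = c' := by
  by_contra hne
  have hcD' : Del ont X c ∪ {c} ⊆ Del ont X c' := Set.union_subset
    (fun x hx => ⟨hx.1, fun hxc' => hx.2 (h.onto_trans hxc' hc'c)⟩)
    (Set.singleton_subset_iff.2 ⟨hc.1, fun hcc' => hne (h.onto_antisymm _ _ hcc' hc'c)⟩)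
  have hXD' : X ⊆ Del ont X c' :=
    hc.2.2.symm.subset.trans ((perpL_perpR_mono hcD').trans hc'.2.1.subset)
  exact (hXD' hc'.1).2 (h.onto_refl c')

end IsTwoAcyclicFS

/-- Theorem 5.11: in a finite two-acyclic factorization system, the canonical join
representation of a closed set `X` is `{T(c) : c ∈ Cov(X)}`. -/
theorem canonical_join_rep_of_closed (S : Type u) [Fintype S] (r ont inj : S → S → Prop)
    (h : IsTwoAcyclicFS r ont inj) (X : Closeds r) :
    IsCanonicalJoinRep {Y : Closeds r | ∃ c ∈ CovS r ont X.val, Y.val = Tset ont c} X := by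
  refine ⟨h.isLUB_tset_covS X, ?_, ?_⟩
  · rintro s hs ⟨_, _⟩ ⟨c, hc, rfl⟩
    obtain ⟨B, hB, hcB⟩ := h.exists_mem_of_isLUB_of_mem_covS hs hc
    exact ⟨B, hB, fun _ hx => h.mem_of_onto B.prop hcB hx⟩
  · rintro ⟨_, _⟩ ⟨c₁, hc₁, rfl⟩ ⟨_, _⟩ ⟨c₂, hc₂, rfl⟩ hne hle
    obtain rfl := h.eq_of_onto_of_mem_covS hc₁ hc₂ (hle (h.onto_refl c₁))
    exact hne rfl

end SDL
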